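/- Let G be a finite group, let k be a field whose characteristic does not divide the order of G, and let H = O_k(G), so that H is commutative and q̃ : S(t_H)_Θ → H is given by q̃(t_x) = x, making S(t_H) a right H-comodule algebra with coaction δ_S = (id ⊗ q̃) ∘ Δ. Then, identifying V_H with its image in S(t_H) under μ̄, one has V_H = S(t_H)^{co-H}, the subalgebra of right H-coinvariants of S(t_H). -/

import Mathlib

/-!
When `H` is commutative and `q̃(t_x) = x`, the universal map `μ` factors as `μ = δ_S ∘ ν`, where
`ν : T(X_H) → S(t_H)` sends `X_x` to `t_x`: both are algebra maps sending `X_x` to `t_{x₁} ⊗ x₂`.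
If `μ(u) = a ⊗ 1`, applying `id ⊗ ε` gives `ν(u) = a`, so `a` lies in `S(t_H)` and is
coinvariant. Conversely a coinvariant `a ∈ S(t_H)` is some `ν(u)`, and then `μ(u) = δ_S(a) = a ⊗ 1`.
-/

open TensorProduct

noncomputable section

/-- A submodule `S` of a coalgebra `C` is a subcoalgebra if `Δ(S) ⊆ S ⊗ S`. -/
def IsSubcoalg (k : Type*) [Field k] {C : Type*} [AddCommGroup C] [Module k C] [Coalgebra k C]
    (S : Submodule k C) : Prop :=
  ∀ x ∈ S, Coalgebra.comul (R := k) x ∈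
    LinearMap.range (TensorProduct.map S.subtype S.subtype)

/-- A coalgebra is pointed if every simple subcoalgebra is one-dimensional. -/
def IsPointedCoalg (k C : Type*) [Field k] [AddCommGroup C] [Module k C] [Coalgebra k C] : Prop :=
  ∀ S : Submodule k C, IsSubcoalg k S → S ≠ ⊥ →
    (∀ T : Submodule k C, IsSubcoalg k T → T < S → T = ⊥) →
    Module.finrank k S = 1

/-- A group-like element: `ε(g) = 1` and `Δ(g) = g ⊗ g`. -/
def IsGpLike (k : Type*) [Field k] {C : Type*} [AddCommGroup C] [Module k C] [Coalgebra k C]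
    (g : C) : Prop :=
  Coalgebra.counit (R := k) g = 1 ∧ Coalgebra.comul (R := k) g = g ⊗ₜ[k] g

/-- Data exhibiting `A` as the free commutative Hopf algebra `S(t_C)_Θ` on a coalgebra `C`. -/
structure FreeCommHopfData (k : Type*) [Field k] (C : Type*) [AddCommGroup C] [Module k C]
    [Coalgebra k C] (A : Type*) [CommRing A] [HopfAlgebra k A] where
  t : C →ₗ[k] A
  tinv : C →ₗ[k] A
  comul_t : ∀ x : C, Coalgebra.comul (R := k) (t x) = TensorProduct.map t t (Coalgebra.comul x)
  comul_tinv : ∀ x : C, Coalgebra.comul (R := k) (tinv x)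
      = TensorProduct.map tinv tinv (TensorProduct.comm k C C (Coalgebra.comul (R := k) x))
  counit_t : ∀ x : C, Coalgebra.counit (R := k) (t x) = Coalgebra.counit (R := k) x
  counit_tinv : ∀ x : C, Coalgebra.counit (R := k) (tinv x) = Coalgebra.counit (R := k) x
  mul_t_tinv : ∀ x : C, LinearMap.mul' k A (TensorProduct.map t tinv (Coalgebra.comul (R := k) x))
      = Coalgebra.counit (R := k) x • (1 : A)
  mul_tinv_t : ∀ x : C, LinearMap.mul' k A (TensorProduct.map tinv t (Coalgebra.comul (R := k) x))
      = Coalgebra.counit (R := k) x • (1 : A)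
  antipode_t : ∀ x : C, HopfAlgebra.antipode (R := k) (t x) = tinv x
  antipode_tinv : ∀ x : C, HopfAlgebra.antipode (R := k) (tinv x) = t x
  injective_t : Function.Injective t
  isDomain : IsDomain A
  adjoin_eq_top : Algebra.adjoin k (Set.range t ∪ Set.range tinv) = ⊤
  universal : ∀ {A' : Type*} [CommRing A'] [HopfAlgebra k A'] (f : C →ₗ[k] A'),
      (∀ x : C, Coalgebra.comul (R := k) (f x) = TensorProduct.map f f (Coalgebra.comul (R := k) x)) →
      (∀ x : C, Coalgebra.counit (R := k) (f x) = Coalgebra.counit (R := k) x) →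
      ∃! φ : A →ₐc[k] A', ∀ x : C, φ (t x) = f x

/-- Data exhibiting `Hab` as the largest commutative Hopf algebra quotient of `H`. -/
structure HabData (k : Type*) [Field k] (H : Type*) [Ring H] [HopfAlgebra k H]
    (Hab : Type*) [CommRing Hab] [HopfAlgebra k Hab] where
  q : H →ₐc[k] Hab
  surjective_q : Function.Surjective q
  universal : ∀ {B : Type*} [CommRing B] [HopfAlgebra k B] (f : H →ₐc[k] B),
      ∃! g : Hab →ₐc[k] B, ∀ x : H, g (q x) = f x

variable {k : Type*} [Field k]

section Generic

variable {H : Type*} [Ring H] [HopfAlgebra k H] {A : Type*} [CommRing A] [HopfAlgebra k A]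

/-- σ(x,y) = t_{x₁} t_{y₁} t⁻¹_{x₂ y₂}. -/
def sigmaElem (F : FreeCommHopfData k H A) (x y : H) : A :=
  (LinearMap.mul' k A).comp
    ((TensorProduct.map (LinearMap.mul' k A) LinearMap.id).comp
      ((TensorProduct.map (TensorProduct.map F.t F.t) (F.tinv.comp (LinearMap.mul' k H))).comp
        (TensorProduct.tensorTensorTensorComm k H H H H).toLinearMap))
    ((Coalgebra.comul (R := k) x) ⊗ₜ[k] (Coalgebra.comul (R := k) y))

/-- σ⁻¹(x,y) = t_{x₁ y₁} t⁻¹_{x₂} t⁻¹_{y₂}. -/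
def sigmaInvElem (F : FreeCommHopfData k H A) (x y : H) : A :=
  (LinearMap.mul' k A).comp
    ((TensorProduct.map LinearMap.id (LinearMap.mul' k A)).comp
      ((TensorProduct.map (F.t.comp (LinearMap.mul' k H)) (TensorProduct.map F.tinv F.tinv)).comp
        (TensorProduct.tensorTensorTensorComm k H H H H).toLinearMap))
    ((Coalgebra.comul (R := k) x) ⊗ₜ[k] (Coalgebra.comul (R := k) y))

/-- The generic base algebra B_H. -/
def genericBase (F : FreeCommHopfData k H A) : Subalgebra k A :=
  Algebra.adjoin k ({a | ∃ x y : H, a = sigmaElem F x y} ∪ {a | ∃ x y : H, a = sigmaInvElem F x y})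

/-- The coaction δ_S = (id ⊗ q̃) ∘ Δ of H_ab on S(t_H)_Θ, as an algebra map. -/
def coactS {Hab : Type*} [CommRing Hab] [HopfAlgebra k Hab] (qt : A →ₐc[k] Hab) :
    A →ₐ[k] A ⊗[k] Hab :=
  (Algebra.TensorProduct.map (AlgHom.id k A) (qt : A →ₐ[k] Hab)).comp (Bialgebra.comulAlgHom k A)

/-- The subalgebra C_H of right H_ab-coinvariants of S(t_H)_Θ. -/
def coinvCH {Hab : Type*} [CommRing Hab] [HopfAlgebra k Hab] (qt : A →ₐc[k] Hab) :
    Subalgebra k A :=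
  AlgHom.equalizer (coactS qt) Algebra.TensorProduct.includeLeft

end Generic

/-- `B` is a localization of `A` (inside an ambient commutative ring `R`): `A ⊆ B`, and `B` is
obtained from `A` by inverting a multiplicative subset of `A`. -/
def IsLocalizationOfSet {R : Type*} [CommRing R] (A B : Set R) : Prop :=
  A ⊆ B ∧ ∃ M : Submonoid R, (M : Set R) ⊆ A ∧ (∀ m ∈ M, ∃ b ∈ B, m * b = 1) ∧
    ∀ b ∈ B, ∃ m ∈ M, b * m ∈ A


section PI

variable {H : Type*} [Ring H] [HopfAlgebra k H] {A : Type*} [CommRing A] [HopfAlgebra k A]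

/-- The coaction δ_T of H on the tensor algebra T(X_H), with δ_T(X_x) = X_{x₁} ⊗ x₂. -/
def coactT (k : Type*) [Field k] (H : Type*) [Ring H] [HopfAlgebra k H] :
    TensorAlgebra k H →ₐ[k] TensorAlgebra k H ⊗[k] H :=
  TensorAlgebra.lift k
    ((TensorProduct.map (TensorAlgebra.ι k) LinearMap.id).comp
      (Coalgebra.comul (R := k) (A := H)))

/-- The universal comodule algebra map μ : T(X_H) → S(t_H) ⊗ H, μ(X_x) = t_{x₁} ⊗ x₂. -/
def muMap (F : FreeCommHopfData k H A) : TensorAlgebra k H →ₐ[k] A ⊗[k] H :=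
  TensorAlgebra.lift k
    ((TensorProduct.map F.t LinearMap.id).comp (Coalgebra.comul (R := k) (A := H)))

/-- p_x = t_{x₁} t_{S(x₂)}, as a linear function of x. -/
def pMap (F : FreeCommHopfData k H A) : H →ₗ[k] A :=
  (LinearMap.mul' k A).comp
    ((TensorProduct.map F.t (F.t.comp (HopfAlgebra.antipode (R := k)))).comp
      (Coalgebra.comul (R := k)))

/-- q_{x,y} = t_{x₁} t_{y₁} t_{S(x₂ y₂)}, as a linear function of x ⊗ y. -/
def qMap (F : FreeCommHopfData k H A) : H ⊗[k] H →ₗ[k] A :=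
  ((LinearMap.mul' k A).comp
    ((TensorProduct.map (LinearMap.mul' k A) LinearMap.id).comp
      ((TensorProduct.map (TensorProduct.map F.t F.t)
          ((F.t.comp ((HopfAlgebra.antipode (R := k)).comp (LinearMap.mul' k H))))).comp
        (TensorProduct.tensorTensorTensorComm k H H H H).toLinearMap))).comp
    (TensorProduct.map (Coalgebra.comul (R := k)) (Coalgebra.comul (R := k)))

/-- P_x = X_{x₁} X_{S(x₂)} in the tensor algebra. -/
def PElem (k : Type*) [Field k] {H : Type*} [Ring H] [HopfAlgebra k H] (x : H) :
    TensorAlgebra k H :=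
  (LinearMap.mul' k (TensorAlgebra k H))
    ((TensorProduct.map (TensorAlgebra.ι k)
      ((TensorAlgebra.ι k).comp (HopfAlgebra.antipode (R := k)))) (Coalgebra.comul (R := k) x))

/-- Q_{x,y} = X_{x₁} X_{y₁} X_{S(x₂ y₂)} in the tensor algebra. -/
def QElem (k : Type*) [Field k] {H : Type*} [Ring H] [HopfAlgebra k H] (x y : H) :
    TensorAlgebra k H :=
  (LinearMap.mul' k (TensorAlgebra k H))
    ((TensorProduct.map (LinearMap.mul' k (TensorAlgebra k H)) LinearMap.id)
      ((TensorProduct.map (TensorProduct.map (TensorAlgebra.ι k) (TensorAlgebra.ι k))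
          ((TensorAlgebra.ι k).comp ((HopfAlgebra.antipode (R := k)).comp (LinearMap.mul' k H))))
        ((TensorProduct.tensorTensorTensorComm k H H H H)
          ((Coalgebra.comul (R := k) x) ⊗ₜ[k] (Coalgebra.comul (R := k) y)))))

/-- μ̄(V_H): the image in S(t_H) ⊆ A of the coinvariants of the universal comodule algebra. -/
def VHSet (F : FreeCommHopfData k H A) : Set A :=
  {a : A | ∃ u : TensorAlgebra k H, muMap F u = a ⊗ₜ[k] 1}

/-- `a` is a monomial of degree ≤ m (and ≥ 1) in the t-variables. -/
def IsTMonomialLe (F : FreeCommHopfData k H A) (m : ℕ) (a : A) : Prop :=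
  ∃ d : ℕ, 1 ≤ d ∧ d ≤ m ∧ ∃ f : Fin d → H, a = ∏ j, F.t (f j)

/-- `a` is a monomial of degree ≤ m in the variables t_g, g group-like. -/
def IsTGpMonomialLe (F : FreeCommHopfData k H A) (m : ℕ) (a : A) : Prop :=
  ∃ d : ℕ, 1 ≤ d ∧ d ≤ m ∧ ∃ f : Fin d → H, (∀ j, IsGpLike k (f j)) ∧ a = ∏ j, F.t (f j)

end PI

/-- Data exhibiting `H` as the Hopf algebra O_k(G) of k-valued functions on a finite group `G`. -/
structure FunAlgData (k : Type*) [Field k] (G : Type*) [Group G] [Fintype G] [DecidableEq G]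
    (H : Type*) [CommRing H] [HopfAlgebra k H] where
  e : Module.Basis G k H
  mul_e : ∀ g h : G, e g * e h = if g = h then e g else 0
  sum_e : ∑ g : G, e g = 1
  comul_e : ∀ g : G, Coalgebra.comul (R := k) (e g) = ∑ h : G, e (g * h⁻¹) ⊗ₜ[k] e h
  counit_e : ∀ g : G, Coalgebra.counit (R := k) (e g) = if g = 1 then (1 : k) else 0
  antipode_e : ∀ g : G, HopfAlgebra.antipode (R := k) (e g) = e g⁻¹

section CommutativeCoaction

variable {H : Type*} [CommRing H] [HopfAlgebra k H] {A : Type*} [CommRing A] [HopfAlgebra k A]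

theorem mem_coinvCH_iff (qt : A →ₐc[k] H) (a : A) :
    a ∈ coinvCH qt ↔ coactS qt a = a ⊗ₜ[k] 1 :=
  AlgHom.mem_equalizer _ _ _

theorem rid_lTensor_counit_coactS (qt : A →ₐc[k] H) (b : A) :
    TensorProduct.rid k A (LinearMap.lTensor A Coalgebra.counit (coactS qt b)) = b := by
  have hcounit : LinearMap.lTensor A Coalgebra.counit ∘ₗ
      (Algebra.TensorProduct.map (AlgHom.id k A) (qt : A →ₐ[k] H)).toLinearMap
        = LinearMap.lTensor A Coalgebra.counit := by
    ext a a'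
    simp [CoalgHomClass.counit_comp_apply]
  rw [coactS, AlgHom.comp_apply, ← AlgHom.toLinearMap_apply, ← LinearMap.comp_apply, hcounit,
    Bialgebra.comulAlgHom_apply, Coalgebra.lTensor_counit_comul, TensorProduct.rid_tmul, one_smul]

theorem coactS_comp_lift_t (F : FreeCommHopfData k H A) (qt : A →ₐc[k] H)
    (hqt : ∀ x : H, qt (F.t x) = x) :
    (coactS qt).comp (TensorAlgebra.lift k F.t) = muMap F := by
  refine TensorAlgebra.hom_ext (LinearMap.ext fun x => ?_)
  simp only [LinearMap.coe_comp, Function.comp_apply, AlgHom.toLinearMap_apply,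
    AlgHom.coe_comp, muMap, TensorAlgebra.lift_ι_apply, coactS,
    Bialgebra.comulAlgHom_apply, F.comul_t x]
  induction Coalgebra.comul (R := k) x using TensorProduct.induction_on with
  | zero => simp
  | tmul a a' => simp [hqt]
  | add u v hu hv => simp only [map_add, hu, hv]

end CommutativeCoaction

theorem stmt_19_general (k : Type*) [Field k]
    (H : Type*) [CommRing H] [HopfAlgebra k H]
    (A : Type*) [CommRing A] [HopfAlgebra k A] (F : FreeCommHopfData k H A)
    (qt : A →ₐc[k] H) (hqt : ∀ x : H, qt (F.t x) = x) :
    VHSet F = {a : A | a ∈ Algebra.adjoin k (Set.range F.t) ∧ a ∈ coinvCH qt} := by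
  have hmu : ∀ u, coactS qt (TensorAlgebra.lift k F.t u) = muMap F u := fun u =>
    DFunLike.congr_fun (coactS_comp_lift_t F qt hqt) u
  ext a
  simp only [VHSet, Set.mem_ofPred_eq, ← TensorAlgebra.range_lift, AlgHom.mem_range,
    mem_coinvCH_iff, ← hmu]
  constructor
  · rintro ⟨u, hu⟩
    have hua : TensorAlgebra.lift k F.t u = a := by
      simpa [rid_lTensor_counit_coactS] using
        congrArg (fun c => TensorProduct.rid k A (LinearMap.lTensor A Coalgebra.counit c)) hu
    exact ⟨⟨u, hua⟩, hua ▸ hu⟩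
  · rintro ⟨⟨u, rfl⟩, hu⟩
    exact ⟨u, hu⟩

/-- Iyer: For `H = O_k(G)` with `char k` not dividing the order of `G`
(`H` is commutative, `H_ab = H` and `q̃(t_x) = x`), identifying `V_H` with its image in `S(t_H)`
under `μ̄`, one has `V_H = S(t_H)^{co-H}`, the subalgebra of right `H`-coinvariants of `S(t_H)`
for the coaction `δ_S = (id ⊗ q̃) ∘ Δ`. -/
theorem stmt_19 (k : Type*) [Field k] (G : Type*) [Group G] [Fintype G] [DecidableEq G]
    (H : Type*) [CommRing H] [HopfAlgebra k H] (E : FunAlgData k G H)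
    (hchar : (Fintype.card G : k) ≠ 0)
    (A : Type*) [CommRing A] [HopfAlgebra k A] (F : FreeCommHopfData k H A)
    (qt : A →ₐc[k] H) (hqt : ∀ x : H, qt (F.t x) = x) :
    VHSet F = {a : A | a ∈ Algebra.adjoin k (Set.range F.t) ∧ a ∈ coinvCH qt} :=
  stmt_19_general k H A F qt hqt

end
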